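/- arXiv:1607.05816 — 2 statements merged into one kernel-verified Lean document; each statement's English description precedes it below -/
import Mathlib

section
/- Let n ≥ 1, weights α_k > 0, ε > 0, λ > 0, and s₁,…,s_n > 0. The minimization over (s̃₁,…,s̃_n, h) ∈ ℝ_{>0}^{n+1} of Σ_k α_k ( ε·KL(s̃_k|s_k) + λ·KL(s̃_k|h) ) has optimal h given by h = ( Σ_k α_k s_k^{ε/(ε+λ)} / Σ_k α_k )^{(ε+λ)/ε}. -/
/-
Writing `g = a^θ b^{1-θ}` with `θ = ε/(ε+λ)`, the log terms combine into
`ε·KL(t|a) + λ·KL(t|b) = (ε+λ)·KL(t|g) + (ε a + λ b - (ε+λ) g)`.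
So for fixed `h` the optimal `s̃_k` is the weighted geometric mean of `s_k` and `h`,
and what is left to minimize over `h` is `λ h Σα - (ε+λ) h^{1-θ} Σ α s^θ` plus a constant.
By weighted AM-GM, `h^{1-θ} h*^θ ≤ (1-θ) h + θ h*`, and the `h*` of the statement is exactly
the one with `h*^θ = Σ α s^θ / Σ α`, which turns AM-GM into the required inequality.
-/

open Finset

/-- Pointwise Kullback-Leibler divergence. -/
noncomputable def klPt (a b : ℝ) : ℝ := a * Real.log (a / b) - a + b

open InformationTheory in
lemma klPt_eq_mul_klFun {a b : ℝ} (hb : b ≠ 0) : klPt a b = b * klFun (a / b) := by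
  unfold klPt klFun
  field_simp
  ring

open InformationTheory in
lemma klPt_nonneg {a b : ℝ} (ha : 0 ≤ a) (hb : 0 < b) : 0 ≤ klPt a b := by
  rw [klPt_eq_mul_klFun hb.ne']
  exact mul_nonneg hb.le (klFun_nonneg (div_nonneg ha hb.le))

lemma klPt_self (a : ℝ) : klPt a a = 0 := by
  by_cases ha : a = 0 <;> simp [klPt, ha]

noncomputable def weightedGeomMean (ε lam a b : ℝ) : ℝ :=
  a ^ (ε / (ε + lam)) * b ^ (lam / (ε + lam))

lemma weightedGeomMean_pos {a b : ℝ} (ε lam : ℝ) (ha : 0 < a) (hb : 0 < b) :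
    0 < weightedGeomMean ε lam a b := by
  unfold weightedGeomMean
  positivity

lemma log_weightedGeomMean {ε lam a b : ℝ} (ha : 0 < a) (hb : 0 < b) :
    Real.log (weightedGeomMean ε lam a b) =
      ε / (ε + lam) * Real.log a + lam / (ε + lam) * Real.log b := by
  rw [weightedGeomMean, Real.log_mul (by positivity) (by positivity), Real.log_rpow ha,
    Real.log_rpow hb]

lemma klPt_add_klPt_eq {ε lam a b t : ℝ} (hel : ε + lam ≠ 0)
    (ha : 0 < a) (hb : 0 < b) (ht : 0 < t) :
    ε * klPt t a + lam * klPt t b =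
      (ε + lam) * klPt t (weightedGeomMean ε lam a b) +
        (ε * a + lam * b - (ε + lam) * weightedGeomMean ε lam a b) := by
  have hg := weightedGeomMean_pos ε lam ha hb
  unfold klPt
  rw [Real.log_div ht.ne' ha.ne', Real.log_div ht.ne' hb.ne', Real.log_div ht.ne' hg.ne',
    log_weightedGeomMean ha hb]
  field_simp
  ring

section Barycenter

variable {ι : Type*} [Fintype ι] (α s : ι → ℝ) (ε lam : ℝ)

/-- The barycenter objective after minimizing over `s̃`, as a function of `h`. -/
noncomputable def klReduced (h : ℝ) : ℝ :=
  ∑ k, α k * (ε * s k + lam * h - (ε + lam) * weightedGeomMean ε lam (s k) h)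

variable {α s ε lam}

lemma klReduced_le_sum_klPt (hα : ∀ k, 0 ≤ α k) (hs : ∀ k, 0 < s k) (hel : 0 < ε + lam)
    {t : ι → ℝ} {h : ℝ} (ht : ∀ k, 0 < t k) (hh : 0 < h) :
    klReduced α s ε lam h ≤ ∑ k, α k * (ε * klPt (t k) (s k) + lam * klPt (t k) h) := by
  refine sum_le_sum fun k _ => mul_le_mul_of_nonneg_left ?_ (hα k)
  rw [klPt_add_klPt_eq hel.ne' (hs k) hh (ht k)]
  have := klPt_nonneg (ht k).le (weightedGeomMean_pos ε lam (hs k) hh)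
  nlinarith

lemma sum_klPt_weightedGeomMean (hs : ∀ k, 0 < s k) (hel : ε + lam ≠ 0) {h : ℝ}
    (hh : 0 < h) :
    ∑ k, α k * (ε * klPt (weightedGeomMean ε lam (s k) h) (s k) +
        lam * klPt (weightedGeomMean ε lam (s k) h) h) = klReduced α s ε lam h := by
  refine sum_congr rfl fun k _ => ?_
  rw [klPt_add_klPt_eq hel (hs k) hh (weightedGeomMean_pos ε lam (hs k) hh), klPt_self]
  ring

lemma klReduced_eq (hel : ε + lam ≠ 0) (h : ℝ) :
    klReduced α s ε lam h = ε * ∑ k, α k * s k +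
      (ε + lam) * (lam / (ε + lam) * h * ∑ k, α k -
        h ^ (lam / (ε + lam)) * ∑ k, α k * s k ^ (ε / (ε + lam))) := by
  simp only [klReduced, weightedGeomMean, mul_sum, ← sum_add_distrib, ← sum_sub_distrib]
  refine sum_congr rfl fun k _ => ?_
  field_simp
  ring

lemma klReduced_le (hε : 0 < ε) (hlam : 0 < lam) (hα : 0 ≤ ∑ k, α k) {g h : ℝ}
    (hg : 0 < g) (hh : 0 ≤ h)
    (hgθ : (∑ k, α k) * g ^ (ε / (ε + lam)) = ∑ k, α k * s k ^ (ε / (ε + lam))) :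
    klReduced α s ε lam g ≤ klReduced α s ε lam h := by
  have hel : 0 < ε + lam := by linarith
  set θ := ε / (ε + lam)
  set c := lam / (ε + lam)
  have hθc : θ + c = 1 := by simp only [θ, c]; field_simp
  have amgm : g ^ θ * h ^ c ≤ θ * g + c * h :=
    Real.geom_mean_le_arith_mean2_weighted (by positivity) (by positivity) hg.le hh hθc
  have hgg : g ^ θ * g ^ c = g := by rw [← Real.rpow_add hg, hθc, Real.rpow_one]
  rw [klReduced_eq hel.ne', klReduced_eq hel.ne', ← hgθ]
  gcongr ε * ∑ k, α k * s k + (ε + lam) * ?_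
  calc c * g * ∑ k, α k - g ^ c * ((∑ k, α k) * g ^ θ)
      = (c * g - g ^ θ * g ^ c) * ∑ k, α k := by ring
    _ ≤ (c * h - g ^ θ * h ^ c) * ∑ k, α k :=
      mul_le_mul_of_nonneg_right (by linear_combination amgm - hgg + g * hθc) hα
    _ = _ := by ring

end Barycenter

/-- In the pointwise KL-barycenter subproblem
`min Σ_k α_k (ε·KL(s̃_k|s_k) + λ·KL(s̃_k|h))`, the optimal `h` is
`(Σ α_k s_k^{ε/(ε+λ)} / Σ α_k)^{(ε+λ)/ε}`: some `s̃*` together with this `h`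
achieves the minimum over all positive `(s̃, h)`. -/
theorem kl_barycenter_optimal_h (n : ℕ) (hn : 1 ≤ n)
    (α s : Fin n → ℝ) (hα : ∀ k, 0 < α k) (hs : ∀ k, 0 < s k)
    (ε lam : ℝ) (hε : 0 < ε) (hlam : 0 < lam) :
    let hstar : ℝ :=
      ((∑ k, α k * s k ^ (ε / (ε + lam))) / (∑ k, α k)) ^ ((ε + lam) / ε)
    ∃ tstar : Fin n → ℝ, (∀ k, 0 < tstar k) ∧ 0 < hstar ∧
      ∀ (t : Fin n → ℝ) (h : ℝ), (∀ k, 0 < t k) → 0 < h →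
        ∑ k, α k * (ε * klPt (tstar k) (s k) + lam * klPt (tstar k) hstar) ≤
          ∑ k, α k * (ε * klPt (t k) (s k) + lam * klPt (t k) h) := by
  intro hstar
  have hel : 0 < ε + lam := by linarith
  have hne : (univ : Finset (Fin n)).Nonempty :=
    univ_nonempty_iff.mpr (Fin.pos_iff_nonempty.mp hn)
  have hA : 0 < ∑ k, α k := sum_pos (fun k _ => hα k) hne
  have hB : 0 < ∑ k, α k * s k ^ (ε / (ε + lam)) :=
    sum_pos (fun k _ => mul_pos (hα k) (Real.rpow_pos_of_pos (hs k) _)) hne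
  have hstar_pos : 0 < hstar := by positivity
  have hstar_pow :
      (∑ k, α k) * hstar ^ (ε / (ε + lam)) = ∑ k, α k * s k ^ (ε / (ε + lam)) := by
    have hexp : (ε + lam) / ε * (ε / (ε + lam)) = 1 := by field_simp
    rw [← Real.rpow_mul (by positivity), hexp, Real.rpow_one, mul_div_cancel₀ _ hA.ne']
  refine ⟨fun k => weightedGeomMean ε lam (s k) hstar,
    fun k => weightedGeomMean_pos ε lam (hs k) hstar_pos, hstar_pos, fun t h ht hh => ?_⟩
  calc _ = klReduced α s ε lam hstar := sum_klPt_weightedGeomMean hs hel.ne' hstar_pos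
    _ ≤ klReduced α s ε lam h := klReduced_le hε hlam hA.le hstar_pos hh.le hstar_pow
    _ ≤ _ := klReduced_le_sum_klPt (fun k => (hα k).le) hs hel ht hh
end

section
/- Let φ be an entropy function, ε > 0, and let s > 0, p > 0 be reals. A real s* > 0 minimizes the function t ↦ ε·KL(t|s) + p·φ(t/p) over t ≥ 0 if and only if 0 ∈ ε log(s*/s) + ∂φ(s*/p); and if p = 0 with φ'_∞ < ∞, the minimizer is s* = s·e^{−φ'_∞/ε}. -/
open Filter

/-!
`t ↦ KL(t|s)` is differentiable at `r > 0` with derivative `log (r / s)`, and its Bregman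
divergence is again a KL divergence: `KL(t|s) - KL(r|s) - log (r / s) (t - r) = KL(t|r) ≥ 0`.
Adding this supporting-line inequality to the subgradient inequality for `φ` shows that the
optimality condition is sufficient; for `p = 0` the same argument applies with the linear term
`t φ'_∞`, since `ε log (s* / s) = -φ'_∞` at `s* = s e^{-φ'_∞/ε}`.

Necessity is a one-sided Fermat rule: if `x` minimizes `f + h` on a convex set, with `f`
differentiable and `h` convex, then along the segment from `x` to `y` the function `f + h` is
majorized by `f` plus the chord of `h`, which still has a minimum at `x`; its derivative there,
`f' (y - x) + h y - h x`, is therefore nonnegative, i.e. `-f'` is a subgradient of `h` at `x`.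
-/

open Set InformationTheory

theorem IsMinOn.le_of_add_convexOn {E : Type*} [NormedAddCommGroup E] [NormedSpace ℝ E]
    {S : Set E} {f h : E → ℝ} {f' : E →L[ℝ] ℝ} {x y : E}
    (hmin : IsMinOn (fun z => f z + h z) S x) (hh : ConvexOn ℝ S h) (hf : HasFDerivAt f f' x)
    (hx : x ∈ S) (hy : y ∈ S) :
    h x - f' (y - x) ≤ h y := by
  set ψ : ℝ → ℝ := fun l => f (x + l • (y - x)) + l * (h y - h x)
  have hψ : HasDerivAt ψ (f' (y - x) + (h y - h x)) 0 := by
    have hline : HasDerivAt (fun l : ℝ => x + l • (y - x)) (y - x) 0 := by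
      simpa using ((hasDerivAt_id (0 : ℝ)).smul_const (y - x)).const_add x
    have hf0 : HasFDerivAt f f' (x + (0 : ℝ) • (y - x)) := by simpa using hf
    exact (hf0.comp_hasDerivAt 0 hline).add (hasDerivAt_mul_const _)
  have hψmin : IsMinOn ψ (Icc 0 1) 0 := by
    intro l ⟨hl0, hl1⟩
    have hseg : x + l • (y - x) = (1 - l) • x + l • y := by
      simp only [smul_sub, sub_smul, one_smul]; abel
    have hchord := hh.2 hx hy (sub_nonneg.2 hl1) hl0 (by ring)
    have hle : f x + h x ≤ f (x + l • (y - x)) + h (x + l • (y - x)) :=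
      hmin (hseg ▸ hh.1 hx hy (sub_nonneg.2 hl1) hl0 (by ring))
    simp only [smul_eq_mul, ← hseg] at hchord
    simp only [ψ, mem_ofPred_eq, zero_smul, add_zero, zero_mul]
    linarith
  have hdir : (1 : ℝ) ∈ posTangentConeAt (Icc 0 1) 0 := by
    simpa using sub_mem_posTangentConeAt_of_segment_subset (segment_eq_Icc zero_le_one).subset
  have := hψmin.localize.hasFDerivWithinAt_nonneg hψ.hasFDerivAt.hasFDerivWithinAt hdir
  rw [ContinuousLinearMap.toSpanSingleton_apply, one_smul] at this
  linarith

theorem convexOn_mul_comp_div {φ : ℝ → ℝ} (hφ : ConvexOn ℝ (Ici 0) φ) {p : ℝ} (hp : 0 < p) :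
    ConvexOn ℝ (Ici 0) fun t => p * φ (t / p) := by
  refine ⟨convex_Ici 0, fun x hx y hy a b ha hb hab => ?_⟩
  have hdiv : (a • x + b • y) / p = a • (x / p) + b • (y / p) := by
    simp only [smul_eq_mul]; ring
  have hconv := hφ.2 (div_nonneg hx hp.le) (div_nonneg hy hp.le) ha hb hab
  show p * φ ((a • x + b • y) / p) ≤ a • (p * φ (x / p)) + b • (p * φ (y / p))
  rw [hdiv]
  simp only [smul_eq_mul] at hconv ⊢
  nlinarith [mul_le_mul_of_nonneg_left hconv hp.le]

theorem klPt_eq_mul_klFun_s18 (t : ℝ) {s : ℝ} (hs : s ≠ 0) : klPt t s = s * klFun (t / s) := by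
  rw [klPt, klFun_apply]
  field_simp
  ring

theorem klPt_nonneg_s18 {t s : ℝ} (ht : 0 ≤ t) (hs : 0 < s) : 0 ≤ klPt t s := by
  rw [klPt_eq_mul_klFun_s18 t hs.ne']
  exact mul_nonneg hs.le (klFun_nonneg (div_nonneg ht hs.le))

theorem hasDerivAt_klPt {r s : ℝ} (hr : r ≠ 0) (hs : s ≠ 0) :
    HasDerivAt (fun t => klPt t s) (Real.log (r / s)) r := by
  have h := ((hasDerivAt_klFun (div_ne_zero hr hs)).comp r
    ((hasDerivAt_id r).div_const s)).const_mul s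
  rw [show (fun t => klPt t s) = fun t => s * klFun (t / s) from
    funext fun t => klPt_eq_mul_klFun_s18 t hs]
  exact h.congr_deriv (by field_simp)

theorem klPt_eq_add_log_mul_add_klPt (t : ℝ) {r s : ℝ} (hr : r ≠ 0) (hs : s ≠ 0) :
    klPt t s = klPt r s + Real.log (r / s) * (t - r) + klPt t r := by
  rcases eq_or_ne t 0 with rfl | ht
  · simp only [klPt, zero_div, Real.log_zero, mul_zero]; ring
  · simp only [klPt, Real.log_div ht hs, Real.log_div hr hs, Real.log_div ht hr]; ring

theorem klPt_add_log_mul_le {t r s : ℝ} (ht : 0 ≤ t) (hr : 0 < r) (hs : s ≠ 0) :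
    klPt r s + Real.log (r / s) * (t - r) ≤ klPt t s := by
  rw [klPt_eq_add_log_mul_add_klPt t hr.ne' hs]
  linarith [klPt_nonneg_s18 ht hr]

/-- Pointwise optimality condition for the KL-proximal operator of a `φ`-divergence:
for `p > 0`, `s* > 0` minimizes `t ↦ ε·KL(t|s) + p·φ(t/p)` iff
`0 ∈ ε log(s*/s) + ∂φ(s*/p)`; and for `p = 0` with finite recession slope `φ'_∞`,
the minimizer of `t ↦ ε·KL(t|s) + t·φ'_∞` is `s·e^{−φ'_∞/ε}`. -/
theorem kl_prox_optimality (φ : ℝ → ℝ) (hφ : ConvexOn ℝ (Set.Ici 0) φ)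
    (ε s : ℝ) (hε : 0 < ε) (hs : 0 < s) :
    (∀ p : ℝ, 0 < p → ∀ sstar : ℝ, 0 < sstar →
      (IsMinOn (fun t => ε * klPt t s + p * φ (t / p)) (Set.Ici 0) sstar ↔
        ∃ g : ℝ, (∀ y ∈ Set.Ici (0 : ℝ),
            φ (sstar / p) + g * (y - sstar / p) ≤ φ y) ∧
          ε * Real.log (sstar / s) + g = 0)) ∧
    (∀ φinf : ℝ, Tendsto (fun x : ℝ => φ x / x) atTop (nhds φinf) →
      IsMinOn (fun t => ε * klPt t s + t * φinf) (Set.Ici 0)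
        (s * Real.exp (-φinf / ε))) := by
  refine ⟨fun p hp r hr => ⟨fun hmin => ?_, fun ⟨g, hg, hsum⟩ t ht => ?_⟩, fun φinf _ t ht => ?_⟩
  · refine ⟨-(ε * Real.log (r / s)), fun y hy => ?_, by ring⟩
    have hf := ((hasDerivAt_klPt hr.ne' hs.ne').const_mul ε).hasFDerivAt
    have hsub := hmin.le_of_add_convexOn (convexOn_mul_comp_div hφ hp) hf hr.le
      (mul_nonneg hp.le hy : (0 : ℝ) ≤ p * y)
    rw [ContinuousLinearMap.toSpanSingleton_apply, smul_eq_mul,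
      mul_div_cancel_left₀ y hp.ne'] at hsub
    have hscale : p * (y - r / p) = p * y - r := by field_simp
    refine le_of_mul_le_mul_left ?_ hp
    linear_combination hsub - ε * Real.log (r / s) * hscale
  · have hkl := mul_le_mul_of_nonneg_left (klPt_add_log_mul_le ht hr hs.ne') hε.le
    have hφt := mul_le_mul_of_nonneg_left (hg (t / p) (div_nonneg ht hp.le)) hp.le
    have hscale : p * (g * (t / p - r / p)) = g * (t - r) := by field_simp
    show ε * klPt r s + p * φ (r / p) ≤ ε * klPt t s + p * φ (t / p)
    linear_combination hkl + hφt - hscale - (t - r) * hsum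
  · have hm : 0 < s * Real.exp (-φinf / ε) := by positivity
    have hlog : ε * Real.log (s * Real.exp (-φinf / ε) / s) = -φinf := by
      rw [mul_div_cancel_left₀ _ hs.ne', Real.log_exp]; field_simp
    have hkl := mul_le_mul_of_nonneg_left (klPt_add_log_mul_le ht hm hs.ne') hε.le
    show ε * klPt _ s + _ * φinf ≤ ε * klPt t s + t * φinf
    linear_combination hkl - (t - s * Real.exp (-φinf / ε)) * hlog
end
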